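/- Let 1 < a ≤ 2 with Q_a Misiurewicz–Thurston, and let R > 0 be an admissible radius for Q_a. Then for every integer m ≥ 1 there exists K > 0 such that the following holds: for all z₀ ∈ ℂ and all n ≥ 1, writing z_i := Q_a^{mi}(z₀), if |Q_a(z₁)| ≥ R and |z_n| ≥ R, then |z₀| ≤ K·|z_n|^{2^{−mn}} and |(Q_a^{mn})′(z₀)| ≥ K^{−1}·2^{mn}·|z_n|^{1 − 2^{−mn}}. -/

import Mathlib

open Set MeasureTheory Filter

noncomputable section

/-- The quadratic map `Q_c(x) = c - x²` on `ℝ`. -/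
def Q (c : ℝ) : ℝ → ℝ := fun x => c - x ^ 2

/-- `Q_c` is Misiurewicz–Thurston: `0` is not periodic but some iterate of `0` is periodic. -/
def MT (c : ℝ) : Prop :=
  (∀ p : ℕ, 1 ≤ p → (Q c)^[p] 0 ≠ 0) ∧
  ∃ k : ℕ, 1 ≤ k ∧ ∃ p : ℕ, 1 ≤ p ∧ (Q c)^[p] ((Q c)^[k] 0) = (Q c)^[k] 0

/-- The quadratic map `Q_a(z) = a - z²` on `ℂ`. -/
def QC (a : ℝ) : ℂ → ℂ := fun z => (a : ℂ) - z ^ 2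

/-- `R` is an admissible radius for `Q_a`: the Julia set (points with bounded forward
orbit) lies in the open disk of radius `R`, and `Q_a⁻¹` of the closed disk of radius `R`
lies in the open disk of radius `R`. -/
def AdmRadius (a R : ℝ) : Prop :=
  0 < R ∧
  (∀ z : ℂ, Bornology.IsBounded (Set.range fun n : ℕ => (QC a)^[n] z) → ‖z‖ < R) ∧
  (∀ z : ℂ, ‖QC a z‖ ≤ R → ‖z‖ < R)

/-! Write `z_j = Q_a^j(z₀)`. Outside the disk of radius `R` the map expands, `|Q_a z| ≥ λ|z|`
with `λ = (R² - a)/R > 1`; the inequality `R + a < R²` comes from admissibility applied to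
`√(R + a)`, which `Q_a` sends to `-R`. The critical orbit is finite, hence inside the disk, so
points near `0` stay in the disk for `m + 1` steps: `|z_{m+1}| ≥ R` therefore forces
`|z_j| ≥ κ λ^j` for all `j`.

With `L_j = log |z_j|` one has `L_{j+1} ≤ 2 L_j + a/|z_j|²`, and these errors are summable.
Weighting the `j`-th step by `1 - 2^{-(j+1)}` telescopes to `(1 - 2^{-N}) L_N ≤ ∑_{j<N} L_j + C`,
which is the derivative bound since `|(Q_a^N)'(z₀)| = 2^N ∏_{j<N} |z_j|`. For the first bound
either `|z₀| < R`, or the whole orbit stays outside the disk, where `L_{j+1} ≥ 2 L_j - c` gives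
`L_0 ≤ 2^{-N} L_N + c`. -/

open Topology

lemma Function.finite_range_iterate_of_isPeriodicPt {α : Type*} {f : α → α} {x : α} {k p : ℕ}
    (hp : 0 < p) (h : Function.IsPeriodicPt f p (f^[k] x)) :
    (Set.range fun n => f^[n] x).Finite := by
  refine ((Set.finite_Iio (k + p)).image fun i => f^[i] x).subset ?_
  rintro _ ⟨n, rfl⟩
  rcases lt_or_ge n k with hn | hn
  · exact ⟨n, by simp only [Set.mem_Iio]; omega, rfl⟩
  · have := Nat.mod_lt (n - k) hp
    refine ⟨(n - k) % p + k, by simp only [Set.mem_Iio]; omega, ?_⟩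
    show f^[(n - k) % p + k] x = f^[n] x
    rw [Function.iterate_add_apply, h.iterate_mod_apply, ← Function.iterate_add_apply,
      Nat.sub_add_cancel hn]

lemma sub_le_div_two_pow_of_forall_two_mul_sub_le {L : ℕ → ℝ} {c : ℝ} (hc : 0 ≤ c) {N : ℕ}
    (h : ∀ j < N, 2 * L j - c ≤ L (j + 1)) : L 0 - c ≤ L N / 2 ^ N := by
  have key : ∀ n ≤ N, 2 ^ n * (L 0 - c) ≤ L n - c := by
    intro n hn
    induction n with
    | zero => simp
    | succ n ih =>
      have := h n (by omega)
      have := ih (by omega)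
      rw [pow_succ]
      linarith
  rw [le_div_iff₀ (by positivity), mul_comm]
  linarith [key N le_rfl]

lemma one_sub_inv_two_pow_mul_le_sum {L e : ℕ → ℝ} (he : ∀ j, 0 ≤ e j) {N : ℕ}
    (h : ∀ j < N, L (j + 1) ≤ 2 * L j + e j) :
    (1 - ((2 : ℝ) ^ N)⁻¹) * L N ≤ ∑ k ∈ Finset.range N, L k + ∑ k ∈ Finset.range N, e k := by
  induction N with
  | zero => simp
  | succ N ih =>
    have ih := ih fun j hj => h j (by omega)
    have hN := h N (by omega)
    have hs₀ : 0 ≤ ((2 : ℝ) ^ N)⁻¹ := by positivity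
    have hs₁ : ((2 : ℝ) ^ N)⁻¹ ≤ 1 := inv_le_one_of_one_le₀ (one_le_pow₀ one_le_two)
    rw [Finset.sum_range_succ, Finset.sum_range_succ, pow_succ, mul_inv]
    nlinarith [mul_nonneg (by linarith : (0 : ℝ) ≤ 1 - ((2 : ℝ) ^ N)⁻¹ * 2⁻¹)
      (by linarith : 0 ≤ 2 * L N + e N - L (N + 1)), mul_nonneg hs₀ (he N)]

lemma sum_div_sq_le_of_mul_pow_le {t : ℕ → ℝ} {a κ ℓ : ℝ} (ha : 0 ≤ a) (hκ : 0 < κ) (hℓ : 1 < ℓ)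
    (ht : ∀ j, κ * ℓ ^ j ≤ t j) (N : ℕ) :
    ∑ k ∈ Finset.range N, a / t k ^ 2 ≤ a / κ ^ 2 * (1 - (ℓ ^ 2)⁻¹)⁻¹ := by
  have hq : (ℓ ^ 2)⁻¹ < 1 := inv_lt_one_of_one_lt₀ (one_lt_pow₀ hℓ two_ne_zero)
  calc ∑ k ∈ Finset.range N, a / t k ^ 2
      ≤ ∑ k ∈ Finset.range N, a / κ ^ 2 * ((ℓ ^ 2)⁻¹) ^ k := by
        refine Finset.sum_le_sum fun k _ => ?_
        calc a / t k ^ 2 ≤ a / (κ * ℓ ^ k) ^ 2 := by gcongr; exact ht k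
          _ = a / κ ^ 2 * ((ℓ ^ 2)⁻¹) ^ k := by
            rw [mul_pow, ← pow_mul, mul_comm k 2, pow_mul, inv_pow, div_mul_eq_div_div,
              div_eq_mul_inv]
    _ = a / κ ^ 2 * ∑ k ∈ Finset.range N, ((ℓ ^ 2)⁻¹) ^ k := (Finset.mul_sum _ _ _).symm
    _ ≤ a / κ ^ 2 * (1 - (ℓ ^ 2)⁻¹)⁻¹ := by
        gcongr
        simpa [← Finset.range_eq_Ico] using
          geom_sum_Ico_le_of_lt_one (m := 0) (n := N) (by positivity) hq

lemma one_le_div_of_add_le_sq {a R : ℝ} (hR : 0 < R) (hRa : R + a ≤ R ^ 2) :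
    1 ≤ (R ^ 2 - a) / R := by
  rw [le_div_iff₀ hR]; linarith

section QuadraticMap

variable {a R : ℝ}

lemma norm_QC_le (ha : 0 ≤ a) (z : ℂ) : ‖QC a z‖ ≤ ‖z‖ ^ 2 + a :=
  calc ‖QC a z‖ ≤ ‖(a : ℂ)‖ + ‖z ^ 2‖ := norm_sub_le _ _
    _ = ‖z‖ ^ 2 + a := by rw [norm_pow, Complex.norm_of_nonneg ha, add_comm]

lemma sq_norm_sub_le_norm_QC (ha : 0 ≤ a) (z : ℂ) : ‖z‖ ^ 2 - a ≤ ‖QC a z‖ :=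
  calc ‖z‖ ^ 2 - a = ‖z ^ 2‖ - ‖(a : ℂ)‖ := by rw [norm_pow, Complex.norm_of_nonneg ha]
    _ ≤ ‖QC a z‖ := (norm_sub_norm_le _ _).trans_eq (norm_sub_rev _ _)

lemma hasDerivAt_iterate_QC (N : ℕ) (z : ℂ) :
    HasDerivAt (QC a)^[N] (∏ k ∈ Finset.range N, -2 * (QC a)^[k] z) z := by
  induction N generalizing z with
  | zero => simpa using hasDerivAt_id z
  | succ N ih =>
    have hQ : HasDerivAt (QC a) (-2 * z) z :=
      ((hasDerivAt_pow 2 z).const_sub (a : ℂ)).congr_deriv (by ring)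
    rw [Finset.prod_range_succ', Function.iterate_succ]
    simpa only [Function.iterate_succ_apply, Function.iterate_zero_apply] using
      (ih (QC a z)).comp z hQ

lemma norm_deriv_iterate_QC (N : ℕ) (z : ℂ) :
    ‖deriv (QC a)^[N] z‖ = 2 ^ N * ∏ k ∈ Finset.range N, ‖(QC a)^[k] z‖ := by
  simp [(hasDerivAt_iterate_QC N z).deriv, Finset.prod_mul_distrib]

lemma semiconj_ofReal_Q_QC : Function.Semiconj ((↑) : ℝ → ℂ) (Q a) (QC a) := fun x => by
  simp [Q, QC]

lemma isBounded_range_iterate_QC_zero_of_MT (h : MT a) :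
    Bornology.IsBounded (Set.range fun n => (QC a)^[n] 0) := by
  obtain ⟨-, k, -, p, hp, hper⟩ := h
  refine ((Function.finite_range_iterate_of_isPeriodicPt hp hper).image
    ((↑) : ℝ → ℂ)).isBounded.subset ?_
  rintro _ ⟨n, rfl⟩
  exact ⟨_, ⟨n, rfl⟩, by simpa using semiconj_ofReal_Q_QC.iterate_right n 0⟩

lemma norm_iterate_QC_zero_lt (hR : AdmRadius a R) (hMa : MT a) (j : ℕ) :
    ‖(QC a)^[j] 0‖ < R :=
  hR.2.1 _ <| (isBounded_range_iterate_QC_zero_of_MT hMa).subset <| by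
    rintro _ ⟨n, rfl⟩
    exact ⟨n + j, by simp only [Function.iterate_add_apply]⟩

lemma add_lt_sq_of_admRadius (hR : AdmRadius a R) (ha : 0 ≤ a) : R + a < R ^ 2 := by
  have hRa : 0 ≤ R + a := by linarith [hR.1]
  have h := hR.2.2 (Real.sqrt (R + a) : ℂ) (by
    rw [QC, ← Complex.ofReal_pow, Real.sq_sqrt hRa, ← Complex.ofReal_sub,
      Complex.norm_real, Real.norm_eq_abs]
    rw [show a - (R + a) = -R by ring, abs_neg, abs_of_pos hR.1])
  rw [Complex.norm_of_nonneg (Real.sqrt_nonneg _)] at h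
  exact (Real.sqrt_lt' hR.1).1 h

lemma mul_norm_le_norm_QC (hR : 0 < R) (ha : 0 ≤ a) {z : ℂ} (hz : R ≤ ‖z‖) :
    (R ^ 2 - a) / R * ‖z‖ ≤ ‖QC a z‖ := by
  refine le_trans ?_ (sq_norm_sub_le_norm_QC ha z)
  rw [div_mul_eq_mul_div, div_le_iff₀ hR]
  nlinarith [mul_nonneg (sub_nonneg.2 hz) (by positivity : (0 : ℝ) ≤ R * ‖z‖ + a)]

lemma pow_mul_le_norm_iterate_QC (hR : 0 < R) (ha : 0 ≤ a) (hRa : R + a ≤ R ^ 2) {z : ℂ}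
    (hz : R ≤ ‖z‖) (j : ℕ) : ((R ^ 2 - a) / R) ^ j * ‖z‖ ≤ ‖(QC a)^[j] z‖ := by
  have hℓ := one_le_div_of_add_le_sq hR hRa
  induction j with
  | zero => simp
  | succ j ih =>
    have hj : R ≤ ‖(QC a)^[j] z‖ :=
      hz.trans ((le_mul_of_one_le_left (norm_nonneg _) (one_le_pow₀ hℓ)).trans ih)
    rw [Function.iterate_succ_apply', pow_succ', mul_assoc]
    exact (mul_le_mul_of_nonneg_left ih (by positivity)).trans (mul_norm_le_norm_QC hR ha hj)

lemma le_norm_iterate_QC (hR : 0 < R) (ha : 0 ≤ a) (hRa : R + a ≤ R ^ 2) {z : ℂ}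
    (hz : R ≤ ‖z‖) (j : ℕ) : R ≤ ‖(QC a)^[j] z‖ :=
  hz.trans <| (le_mul_of_one_le_left (norm_nonneg _)
    (one_le_pow₀ (one_le_div_of_add_le_sq hR hRa))).trans
      (pow_mul_le_norm_iterate_QC hR ha hRa hz j)

lemma exists_pos_le_norm_of_le_norm_iterate_QC (hR : AdmRadius a R) (hMa : MT a) (M : ℕ) :
    ∃ ε > 0, ∀ j ≤ M, ∀ w : ℂ, R ≤ ‖(QC a)^[j] w‖ → ε ≤ ‖w‖ := by
  have hcont (j : ℕ) : Continuous (QC a)^[j] :=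
    (continuous_const.sub (continuous_pow 2)).iterate j
  have hnear : ∀ᶠ w in 𝓝 (0 : ℂ), ∀ j ∈ Set.Iic M, ‖(QC a)^[j] w‖ < R :=
    (Set.finite_Iic M).eventually_all.2 fun j _ =>
      (hcont j).continuousAt.norm.eventually (gt_mem_nhds (norm_iterate_QC_zero_lt hR hMa j))
  obtain ⟨ε, hε, hball⟩ := Metric.eventually_nhds_iff.1 hnear
  refine ⟨ε, hε, fun j hj w hw => ?_⟩
  by_contra! h
  exact (hball (by simpa using h) j hj).not_ge hw

lemma exists_pos_mul_pow_le_norm_iterate_QC (hR : AdmRadius a R) (hMa : MT a) (ha : 0 ≤ a)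
    (M : ℕ) : ∃ κ > 0, ∀ z : ℂ, R ≤ ‖(QC a)^[M] z‖ →
      ∀ j, κ * ((R ^ 2 - a) / R) ^ j ≤ ‖(QC a)^[j] z‖ := by
  obtain ⟨ε, hε, hεle⟩ := exists_pos_le_norm_of_le_norm_iterate_QC hR hMa M
  have hRa := (add_lt_sq_of_admRadius hR ha).le
  set ℓ := (R ^ 2 - a) / R
  have hℓ : 1 ≤ ℓ := one_le_div_of_add_le_sq hR.1 hRa
  refine ⟨ε / ℓ ^ M, by positivity, fun z hz j => ?_⟩
  have hearly : ∀ j ≤ M, ε ≤ ‖(QC a)^[j] z‖ := fun j hj =>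
    hεle (M - j) (by omega) _ (by rwa [← Function.iterate_add_apply, Nat.sub_add_cancel hj])
  rcases le_total j M with hj | hj
  · calc ε / ℓ ^ M * ℓ ^ j ≤ ε := by
          rw [div_mul_eq_mul_div, div_le_iff₀ (by positivity)]
          gcongr
      _ ≤ ‖(QC a)^[j] z‖ := hearly j hj
  · obtain ⟨i, rfl⟩ := Nat.exists_eq_add_of_le hj
    calc ε / ℓ ^ M * ℓ ^ (M + i) = ℓ ^ i * ε := by
          rw [pow_add]; field_simp
      _ ≤ ℓ ^ i * ‖(QC a)^[M] z‖ := by gcongr; exact hearly M le_rfl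
      _ ≤ ‖(QC a)^[i] ((QC a)^[M] z)‖ := pow_mul_le_norm_iterate_QC hR.1 ha hRa hz i
      _ = ‖(QC a)^[M + i] z‖ := by rw [← Function.iterate_add_apply, add_comm]

lemma log_norm_QC_le (ha : 0 ≤ a) {z : ℂ} (hz : z ≠ 0) (hQz : QC a z ≠ 0) :
    Real.log ‖QC a z‖ ≤ 2 * Real.log ‖z‖ + a / ‖z‖ ^ 2 := by
  have hz' : 0 < ‖z‖ := norm_pos_iff.2 hz
  calc Real.log ‖QC a z‖ ≤ Real.log (‖z‖ ^ 2 * Real.exp (a / ‖z‖ ^ 2)) := by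
        refine Real.log_le_log (norm_pos_iff.2 hQz) ((norm_QC_le ha z).trans ?_)
        calc ‖z‖ ^ 2 + a = ‖z‖ ^ 2 * (a / ‖z‖ ^ 2 + 1) := by field_simp; ring
          _ ≤ ‖z‖ ^ 2 * Real.exp (a / ‖z‖ ^ 2) := by gcongr; exact Real.add_one_le_exp _
    _ = 2 * Real.log ‖z‖ + a / ‖z‖ ^ 2 := by
        rw [Real.log_mul (by positivity) (Real.exp_pos _).ne', Real.log_exp, Real.log_pow]
        norm_num

lemma log_norm_QC_ge (hR : 0 < R) (ha : 0 ≤ a) (haR : a < R ^ 2) {z : ℂ} (hz : R ≤ ‖z‖) :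
    2 * Real.log ‖z‖ + Real.log (1 - a / R ^ 2) ≤ Real.log ‖QC a z‖ := by
  have hθ : 0 < 1 - a / R ^ 2 := by rw [sub_pos, div_lt_one (by positivity)]; exact haR
  have hRz : R ^ 2 ≤ ‖z‖ ^ 2 := by gcongr
  have hz' : 0 < ‖z‖ := hR.trans_le hz
  have hlow : ‖z‖ ^ 2 * (1 - a / R ^ 2) ≤ ‖QC a z‖ := by
    refine le_trans ?_ (sq_norm_sub_le_norm_QC ha z)
    rw [mul_sub, mul_one, sub_le_sub_iff_left, mul_div_assoc', le_div_iff₀ (by positivity)]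
    nlinarith
  calc 2 * Real.log ‖z‖ + Real.log (1 - a / R ^ 2)
      = Real.log (‖z‖ ^ 2 * (1 - a / R ^ 2)) := by
        rw [Real.log_mul (by positivity) hθ.ne', Real.log_pow]; norm_num
    _ ≤ Real.log ‖QC a z‖ := Real.log_le_log (by positivity) hlow

lemma norm_le_mul_norm_iterate_QC_rpow (ha : 0 ≤ a) (hR : 0 < R) (hRa : R + a < R ^ 2) {z : ℂ}
    {N : ℕ} (hN : R ≤ ‖(QC a)^[N] z‖) :
    ‖z‖ ≤ max R (1 - a / R ^ 2)⁻¹ * ‖(QC a)^[N] z‖ ^ ((2 : ℝ) ^ N)⁻¹ := by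
  have htN : 0 < ‖(QC a)^[N] z‖ := hR.trans_le hN
  rcases lt_or_ge ‖z‖ R with hz | hz
  · have hR1 : 1 ≤ R := by nlinarith
    calc ‖z‖ ≤ R * 1 := by linarith
      _ ≤ _ := by gcongr; exacts [le_max_left _ _, Real.one_le_rpow (by linarith) (by positivity)]
  · have hθ : 0 < 1 - a / R ^ 2 := by rw [sub_pos, div_lt_one (by positivity)]; nlinarith
    have hc : 0 ≤ -Real.log (1 - a / R ^ 2) :=
      neg_nonneg.2 (Real.log_nonpos hθ.le (by linarith [div_nonneg ha (sq_nonneg R)]))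
    have hlog := sub_le_div_two_pow_of_forall_two_mul_sub_le
      (L := fun j => Real.log ‖(QC a)^[j] z‖) hc (N := N) fun j _ => by
        rw [Function.iterate_succ_apply']
        linarith [log_norm_QC_ge hR ha (by linarith) (le_norm_iterate_QC hR ha hRa.le hz j)]
    simp only [Function.iterate_zero_apply] at hlog
    calc ‖z‖ ≤ (1 - a / R ^ 2)⁻¹ * ‖(QC a)^[N] z‖ ^ ((2 : ℝ) ^ N)⁻¹ := by
          rw [← Real.log_le_log_iff (hR.trans_le hz) (by positivity),
            Real.log_mul (inv_pos.2 hθ).ne' (Real.rpow_pos_of_pos htN _).ne', Real.log_inv,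
            Real.log_rpow htN, inv_mul_eq_div]
          linarith
      _ ≤ _ := by gcongr; exact le_max_right _ _

lemma rpow_le_mul_prod_norm_iterate_QC (ha : 0 ≤ a) {κ ℓ : ℝ} (hκ : 0 < κ) (hℓ : 1 < ℓ) {z : ℂ}
    (hz : ∀ j, κ * ℓ ^ j ≤ ‖(QC a)^[j] z‖) (N : ℕ) :
    ‖(QC a)^[N] z‖ ^ (1 - ((2 : ℝ) ^ N)⁻¹) ≤
      Real.exp (a / κ ^ 2 * (1 - (ℓ ^ 2)⁻¹)⁻¹) * ∏ k ∈ Finset.range N, ‖(QC a)^[k] z‖ := by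
  have hpos (j : ℕ) : 0 < ‖(QC a)^[j] z‖ :=
    (by positivity : (0 : ℝ) < κ * ℓ ^ j).trans_le (hz j)
  have hsum := sum_div_sq_le_of_mul_pow_le ha hκ hℓ hz N
  have hlog := one_sub_inv_two_pow_mul_le_sum (L := fun k => Real.log ‖(QC a)^[k] z‖)
    (e := fun k => a / ‖(QC a)^[k] z‖ ^ 2) (fun _ => by positivity) (N := N) fun j _ => by
      have hQ := hpos (j + 1)
      rw [Function.iterate_succ_apply'] at hQ ⊢
      exact log_norm_QC_le ha (norm_pos_iff.1 (hpos j)) (norm_pos_iff.1 hQ)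
  rw [← Real.log_le_log_iff (Real.rpow_pos_of_pos (hpos N) _)
      (mul_pos (Real.exp_pos _) (Finset.prod_pos fun k _ => hpos k)),
    Real.log_mul (Real.exp_pos _).ne' (Finset.prod_pos fun k _ => hpos k).ne', Real.log_exp,
    Real.log_rpow (hpos N), Real.log_prod fun k _ => (hpos k).ne']
  linarith

end QuadraticMap

theorem stmt_5_general (a R : ℝ) (ha1 : 1 < a) (hMa : MT a) (hR : AdmRadius a R) :
    ∀ m : ℕ, 1 ≤ m → ∃ K : ℝ, 0 < K ∧
      ∀ z₀ : ℂ, ∀ n : ℕ, 1 ≤ n →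
        R ≤ ‖QC a ((QC a)^[m] z₀)‖ →
        R ≤ ‖(QC a)^[m * n] z₀‖ →
          ‖z₀‖ ≤
              K * ‖(QC a)^[m * n] z₀‖ ^ ((2 : ℝ) ^ (-((m * n : ℕ) : ℝ))) ∧
          K⁻¹ * 2 ^ (m * n) *
              ‖(QC a)^[m * n] z₀‖ ^ (1 - (2 : ℝ) ^ (-((m * n : ℕ) : ℝ)))
            ≤ ‖deriv ((QC a)^[m * n]) z₀‖ := by
  intro m _
  have ha : 0 ≤ a := by linarith
  have hRa := add_lt_sq_of_admRadius hR ha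
  have hℓ : 1 < (R ^ 2 - a) / R := by rw [lt_div_iff₀ hR.1]; linarith
  obtain ⟨κ, hκ, hgeom⟩ := exists_pos_mul_pow_le_norm_iterate_QC hR hMa ha (m + 1)
  set K₁ := max R (1 - a / R ^ 2)⁻¹
  set K₂ := Real.exp (a / κ ^ 2 * (1 - (((R ^ 2 - a) / R) ^ 2)⁻¹)⁻¹)
  have hK : 0 < max K₁ K₂ := lt_max_of_lt_right (Real.exp_pos _)
  refine ⟨max K₁ K₂, hK, fun z n _ hz hN => ?_⟩
  rw [← Function.iterate_succ_apply' (QC a)] at hz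
  rw [Real.rpow_neg zero_le_two, Real.rpow_natCast, norm_deriv_iterate_QC]
  constructor
  · exact (norm_le_mul_norm_iterate_QC_rpow ha hR.1 hRa hN).trans
      (mul_le_mul_of_nonneg_right (le_max_left _ _) (by positivity))
  · calc (max K₁ K₂)⁻¹ * 2 ^ (m * n) * ‖(QC a)^[m * n] z‖ ^ (1 - ((2 : ℝ) ^ (m * n))⁻¹)
        ≤ (max K₁ K₂)⁻¹ * 2 ^ (m * n) *
            (max K₁ K₂ * ∏ k ∈ Finset.range (m * n), ‖(QC a)^[k] z‖) := by
          gcongr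
          exact (rpow_le_mul_prod_norm_iterate_QC ha hκ hℓ (hgeom z hz) _).trans
            (mul_le_mul_of_nonneg_right (le_max_right _ _) (by positivity))
      _ = 2 ^ (m * n) * ∏ k ∈ Finset.range (m * n), ‖(QC a)^[k] z‖ := by
          field_simp

/-- Backward shrinking of `Q_a` outside `V_a` (Lemma on contracting inverse branches,
case (i)). -/
theorem stmt_5 (a R : ℝ) (ha1 : 1 < a) (ha2 : a ≤ 2) (hMa : MT a) (hR : AdmRadius a R) :
    ∀ m : ℕ, 1 ≤ m → ∃ K : ℝ, 0 < K ∧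
      ∀ z₀ : ℂ, ∀ n : ℕ, 1 ≤ n →
        R ≤ ‖QC a ((QC a)^[m] z₀)‖ →
        R ≤ ‖(QC a)^[m * n] z₀‖ →
          ‖z₀‖ ≤
              K * ‖(QC a)^[m * n] z₀‖ ^ ((2 : ℝ) ^ (-((m * n : ℕ) : ℝ))) ∧
          K⁻¹ * 2 ^ (m * n) *
              ‖(QC a)^[m * n] z₀‖ ^ (1 - (2 : ℝ) ^ (-((m * n : ℕ) : ℝ)))
            ≤ ‖deriv ((QC a)^[m * n]) z₀‖ :=
  stmt_5_general a R ha1 hMa hR
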